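/- arXiv:1606.07796 — 2 statements merged into one kernel-verified Lean document; each statement's English description precedes it below -/
import Mathlib

section
/- In one dimension, with Op(x²ξ) := (1/(6i))[X³, D²] and Op(xξ²) := (1/(6i))[X², D³] on 𝒮(ℝ), one has (1/(3i))[Op(x²ξ), Op(xξ²)] = X²D² - 2iXD - (1/3)·Id. -/
noncomputable def Xop : (ℝ → ℂ) → (ℝ → ℂ) := fun u x => (x : ℂ) * u x

noncomputable def Dop : (ℝ → ℂ) → (ℝ → ℂ) := fun u x => -Complex.I * deriv u x

/-- Commutator of two operators. -/
noncomputable def commOp (A B : (ℝ → ℂ) → (ℝ → ℂ)) : (ℝ → ℂ) → (ℝ → ℂ) :=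
  fun u x => A (B u) x - B (A u) x

/-- `Op(x²ξ) = (1/6i)[X³,D²]`. -/
noncomputable def OpX2Xi : (ℝ → ℂ) → (ℝ → ℂ) :=
  fun u x => (1 / (6 * Complex.I)) * commOp (Xop^[3]) (Dop^[2]) u x

/-- `Op(xξ²) = (1/6i)[X²,D³]`. -/
noncomputable def OpXXi2 : (ℝ → ℂ) → (ℝ → ℂ) :=
  fun u x => (1 / (6 * Complex.I)) * commOp (Xop^[2]) (Dop^[3]) u x

open scoped ContDiff in
private lemma hR (y : ℝ) : HasDerivAt (fun z : ℝ => (z : ℂ)) 1 y := by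
  simpa using (hasDerivAt_id y).ofReal_comp

private lemma hcongr {f : ℝ → ℂ} {d d' : ℂ} {y : ℝ} (h : HasDerivAt f d y) (e : d' = d) :
    HasDerivAt f d' y := e ▸ h

private lemma Dop_eq {f g : ℝ → ℂ} (h : ∀ y, HasDerivAt f (g y) y) :
    Dop f = fun y => -Complex.I * g y := by
  funext y
  show -Complex.I * deriv f y = -Complex.I * g y
  rw [(h y).deriv]

private lemma inv6I : (1:ℂ)/(6*Complex.I) = -(Complex.I/6) := by
  rw [div_eq_iff (by simp [Complex.I_ne_zero])]
  linear_combination Complex.I_mul_I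

private lemma inv3I : (1:ℂ)/(3*Complex.I) = -(Complex.I/3) := by
  rw [div_eq_iff (by simp [Complex.I_ne_zero])]
  linear_combination Complex.I_mul_I

private lemma opA_eq {f f1 f2 : ℝ → ℂ}
    (h0 : ∀ y, HasDerivAt f (f1 y) y) (h1 : ∀ y, HasDerivAt f1 (f2 y) y) :
    OpX2Xi f = fun y : ℝ =>
      -Complex.I * ((y:ℂ) * f y + (y:ℂ) * ((y:ℂ) * f1 y)) := by
  have eD2 : Dop^[2] f = fun y => -Complex.I * (-Complex.I * f2 y) := by
    show Dop (Dop f) = _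
    rw [Dop_eq h0]
    exact Dop_eq fun y => (h1 y).const_mul (-Complex.I)
  have k1 : Dop (Xop^[3] f) = fun z : ℝ =>
      -Complex.I * (3*((z:ℂ)*((z:ℂ)*f z)) + (z:ℂ)*((z:ℂ)*((z:ℂ)*f1 z))) :=
    Dop_eq fun y => hcongr ((hR y).mul ((hR y).mul ((hR y).mul (h0 y))))
      (by simp only [Xop]; ring)
  have k2 : Dop (fun z : ℝ =>
      -Complex.I * (3*((z:ℂ)*((z:ℂ)*f z)) + (z:ℂ)*((z:ℂ)*((z:ℂ)*f1 z)))) = fun z : ℝ =>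
      -Complex.I * (-Complex.I *
        (6*((z:ℂ)*f z) + 6*((z:ℂ)*((z:ℂ)*f1 z)) + (z:ℂ)*((z:ℂ)*((z:ℂ)*f2 z)))) :=
    Dop_eq fun y => hcongr
      (((((hR y).mul ((hR y).mul (h0 y))).const_mul 3).add
        ((hR y).mul ((hR y).mul ((hR y).mul (h1 y))))).const_mul (-Complex.I)) (by simp only [Pi.mul_apply]; ring)
  have eDD : Dop^[2] (Xop^[3] f) = fun z : ℝ =>
      -Complex.I * (-Complex.I *
        (6*((z:ℂ)*f z) + 6*((z:ℂ)*((z:ℂ)*f1 z)) + (z:ℂ)*((z:ℂ)*((z:ℂ)*f2 z)))) := by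
    show Dop (Dop (Xop^[3] f)) = _
    rw [k1]; exact k2
  funext y
  show 1/(6*Complex.I) * (Xop^[3] (Dop^[2] f) y - Dop^[2] (Xop^[3] f) y) = _
  rw [eD2, eDD, inv6I]
  rw [show Xop^[3] (fun w : ℝ => -Complex.I * (-Complex.I * f2 w)) y
      = (y:ℂ)*((y:ℂ)*((y:ℂ)*(-Complex.I * (-Complex.I * f2 y)))) from rfl]
  linear_combination (Complex.I * ((y:ℂ)*f y + (y:ℂ)*((y:ℂ)*f1 y))) * Complex.I_mul_I

private lemma opB_eq {f f1 f2 f3 : ℝ → ℂ}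
    (h0 : ∀ y, HasDerivAt f (f1 y) y) (h1 : ∀ y, HasDerivAt f1 (f2 y) y)
    (h2 : ∀ y, HasDerivAt f2 (f3 y) y) :
    OpXXi2 f = fun y : ℝ => -(f1 y + (y:ℂ) * f2 y) := by
  have eD3 : Dop^[3] f = fun y => -Complex.I * (-Complex.I * (-Complex.I * f3 y)) := by
    show Dop (Dop (Dop f)) = _
    rw [Dop_eq h0, Dop_eq fun y => (h1 y).const_mul (-Complex.I)]
    exact Dop_eq fun y => ((h2 y).const_mul (-Complex.I)).const_mul (-Complex.I)
  have m1 : Dop (Xop^[2] f) = fun z : ℝ =>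
      -Complex.I * (2*((z:ℂ)*f z) + (z:ℂ)*((z:ℂ)*f1 z)) :=
    Dop_eq fun y => hcongr ((hR y).mul ((hR y).mul (h0 y))) (by simp only [Xop]; ring)
  have m2 : Dop (fun z : ℝ => -Complex.I * (2*((z:ℂ)*f z) + (z:ℂ)*((z:ℂ)*f1 z)))
      = fun z : ℝ => -Complex.I * (-Complex.I *
        (2*f z + 4*((z:ℂ)*f1 z) + (z:ℂ)*((z:ℂ)*f2 z))) :=
    Dop_eq fun y => hcongr
      (((((hR y).mul (h0 y)).const_mul 2).add
        ((hR y).mul ((hR y).mul (h1 y)))).const_mul (-Complex.I)) (by simp only [Pi.mul_apply]; ring)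
  have m3 : Dop (fun z : ℝ => -Complex.I * (-Complex.I *
        (2*f z + 4*((z:ℂ)*f1 z) + (z:ℂ)*((z:ℂ)*f2 z))))
      = fun z : ℝ => -Complex.I * (-Complex.I * (-Complex.I *
        (6*f1 z + 6*((z:ℂ)*f2 z) + (z:ℂ)*((z:ℂ)*f3 z)))) :=
    Dop_eq fun y => hcongr
      (((((h0 y).const_mul 2).add (((hR y).mul (h1 y)).const_mul 4)).add
        ((hR y).mul ((hR y).mul (h2 y)))).const_mul (-Complex.I) |>.const_mul
          (-Complex.I)) (by simp only [Pi.mul_apply]; ring)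
  have eDDX : Dop^[3] (Xop^[2] f) = fun z : ℝ =>
      -Complex.I * (-Complex.I * (-Complex.I *
        (6*f1 z + 6*((z:ℂ)*f2 z) + (z:ℂ)*((z:ℂ)*f3 z)))) := by
    show Dop (Dop (Dop (Xop^[2] f))) = _
    rw [m1, m2]; exact m3
  funext y
  show 1/(6*Complex.I) * (Xop^[2] (Dop^[3] f) y - Dop^[3] (Xop^[2] f) y) = _
  rw [eD3, eDDX, inv6I]
  rw [show Xop^[2] (fun w : ℝ => -Complex.I * (-Complex.I * (-Complex.I * f3 w))) y
      = (y:ℂ)*((y:ℂ)*(-Complex.I * (-Complex.I * (-Complex.I * f3 y)))) from rfl]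
  linear_combination ((1 - Complex.I*Complex.I) * (f1 y + (y:ℂ)*f2 y)) * Complex.I_mul_I

open scoped ContDiff in
theorem stmt15 (u : SchwartzMap ℝ ℂ) (x : ℝ) :
    (1 / (3 * Complex.I)) * commOp OpX2Xi OpXXi2 ⇑u x
      = Xop^[2] (Dop^[2] ⇑u) x - 2 * Complex.I * Xop (Dop ⇑u) x - (1 / 3) * u x := by
  have c0 : ContDiff ℝ ∞ ⇑u := u.smooth ⊤
  set u1 : ℝ → ℂ := deriv ⇑u with hu1
  set u2 : ℝ → ℂ := deriv u1 with hu2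
  set u3 : ℝ → ℂ := deriv u2 with hu3
  set u4 : ℝ → ℂ := deriv u3 with hu4
  have c1 : ContDiff ℝ ∞ u1 := by rw [hu1]; exact (contDiff_infty_iff_deriv.mp c0).2
  have c2 : ContDiff ℝ ∞ u2 := by rw [hu2]; exact (contDiff_infty_iff_deriv.mp c1).2
  have c3 : ContDiff ℝ ∞ u3 := by rw [hu3]; exact (contDiff_infty_iff_deriv.mp c2).2
  have h0 : ∀ y, HasDerivAt (⇑u) (u1 y) y := fun y => by
    rw [hu1]; exact ((contDiff_infty_iff_deriv.mp c0).1 y).hasDerivAt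
  have h1 : ∀ y, HasDerivAt u1 (u2 y) y := fun y => by
    rw [hu2]; exact ((contDiff_infty_iff_deriv.mp c1).1 y).hasDerivAt
  have h2 : ∀ y, HasDerivAt u2 (u3 y) y := fun y => by
    rw [hu3]; exact ((contDiff_infty_iff_deriv.mp c2).1 y).hasDerivAt
  have h3 : ∀ y, HasDerivAt u3 (u4 y) y := fun y => by
    rw [hu4]; exact ((contDiff_infty_iff_deriv.mp c3).1 y).hasDerivAt
  -- derivatives of A = OpX2Xi u
  have hA0 : ∀ y, HasDerivAt
      (fun z : ℝ => -Complex.I * ((z:ℂ) * ⇑u z + (z:ℂ) * ((z:ℂ) * u1 z)))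
      (-Complex.I * (⇑u y + 3*((y:ℂ)*u1 y) + (y:ℂ)*((y:ℂ)*u2 y))) y := fun y =>
    hcongr ((((hR y).mul (h0 y)).add
      ((hR y).mul ((hR y).mul (h1 y)))).const_mul (-Complex.I)) (by simp only [Pi.mul_apply]; ring)
  have hA1 : ∀ y, HasDerivAt
      (fun z : ℝ => -Complex.I * (⇑u z + 3*((z:ℂ)*u1 z) + (z:ℂ)*((z:ℂ)*u2 z)))
      (-Complex.I * (4*u1 y + 5*((y:ℂ)*u2 y) + (y:ℂ)*((y:ℂ)*u3 y))) y := fun y =>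
    hcongr ((((h0 y).add (((hR y).mul (h1 y)).const_mul 3)).add
      ((hR y).mul ((hR y).mul (h2 y)))).const_mul (-Complex.I)) (by simp only [Pi.mul_apply]; ring)
  have hA2 : ∀ y, HasDerivAt
      (fun z : ℝ => -Complex.I * (4*u1 z + 5*((z:ℂ)*u2 z) + (z:ℂ)*((z:ℂ)*u3 z)))
      (-Complex.I * (9*u2 y + 7*((y:ℂ)*u3 y) + (y:ℂ)*((y:ℂ)*u4 y))) y := fun y =>
    hcongr (((((h1 y).const_mul 4).add (((hR y).mul (h2 y)).const_mul 5)).add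
      ((hR y).mul ((hR y).mul (h3 y)))).const_mul (-Complex.I)) (by simp only [Pi.mul_apply]; ring)
  -- derivatives of B = OpXXi2 u
  have hB0 : ∀ y, HasDerivAt (fun z : ℝ => -(u1 z + (z:ℂ) * u2 z))
      (-(2*u2 y + (y:ℂ)*u3 y)) y := fun y =>
    hcongr (((h1 y).add ((hR y).mul (h2 y))).neg) (by ring)
  have hB1 : ∀ y, HasDerivAt (fun z : ℝ => -(2*u2 z + (z:ℂ) * u3 z))
      (-(3*u3 y + (y:ℂ)*u4 y)) y := fun y =>
    hcongr ((((h2 y).const_mul 2).add ((hR y).mul (h3 y))).neg) (by ring)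
  have eD2u : Dop^[2] ⇑u = fun y => -Complex.I * (-Complex.I * u2 y) := by
    show Dop (Dop ⇑u) = _
    rw [Dop_eq h0]
    exact Dop_eq fun y => (h1 y).const_mul (-Complex.I)
  show 1/(3*Complex.I) * (OpX2Xi (OpXXi2 ⇑u) x - OpXXi2 (OpX2Xi ⇑u) x)
      = Xop^[2] (Dop^[2] ⇑u) x - 2 * Complex.I * Xop (Dop ⇑u) x - (1/3) * ⇑u x
  rw [opA_eq h0 h1, opB_eq h0 h1 h2, opA_eq hB0 hB1, opB_eq hA0 hA1 hA2,
    eD2u, Dop_eq h0]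
  rw [show Xop^[2] (fun y : ℝ => -Complex.I * (-Complex.I * u2 y)) x
      = (x:ℂ)*((x:ℂ)*(-Complex.I * (-Complex.I * u2 x))) from rfl]
  rw [show Xop (fun y : ℝ => -Complex.I * u1 y) x
      = (x:ℂ)*(-Complex.I * u1 x) from rfl]
  rw [inv3I]
  linear_combination (⇑u x / 3) * Complex.I_mul_I
end

section
/- There is no linear map Op from polynomials in (x,ξ) of degree ≤ 4 (in one dimension) to operators on 𝒮(ℝ) such that Op(x^k) = X^k and Op(ξ^k) = D^k for k ≤ 3, Op(x²ξ) = (1/(6i))[X³,D²], Op(xξ²) = (1/(6i))[X²,D³], and which satisfies [Op(a),Op(b)] = i·Op({a,b}) for the pairs (a,b) = (x³,ξ³) and (a,b) = (x²ξ, xξ²). Indeed {x³,ξ³}/9 = {x²ξ,xξ²}/3 = x²ξ² but (1/(9i))[X³,D³] - (1/(3i))[(1/(6i))[X³,D²], (1/(6i))[X²,D³]] = -(1/3)·Id ≠ 0. -/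
/-- Poisson bracket `{a,b} = ∂ₓa·∂_ξb - ∂ₓb·∂_ξa` on polynomials in `(x,ξ)`
(variable `0` is `x`, variable `1` is `ξ`). -/
noncomputable def pb (a b : MvPolynomial (Fin 2) ℝ) : MvPolynomial (Fin 2) ℝ :=
  MvPolynomial.pderiv 0 a * MvPolynomial.pderiv 1 b
    - MvPolynomial.pderiv 0 b * MvPolynomial.pderiv 1 a

/-! ### Auxiliary machinery: cubic polynomial functions -/

/-- A cubic polynomial `a + bx + cx² + dx³` as a function `ℝ → ℂ`. -/
noncomputable def Cub (a b c d : ℂ) : ℝ → ℂ :=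
  fun x => a + b * x + c * (x:ℂ)^2 + d * (x:ℂ)^3

lemma cub_hasDerivAt (a b c d : ℂ) (x : ℝ) :
    HasDerivAt (Cub a b c d) (b + 2*c*x + 3*d*(x:ℂ)^2) x := by
  have hx : HasDerivAt (fun x:ℝ => (x:ℂ)) 1 x := by
    simpa using (hasDerivAt_id x).ofReal_comp
  have h1 := hx.const_mul b
  have h2 := (hx.mul hx).const_mul c
  have h3 := ((hx.mul hx).mul hx).const_mul d
  have h := (((hasDerivAt_const x a).add h1).add h2).add h3
  have e1 : Cub a b c d = fun x:ℝ => a + b * x + c * ((x:ℂ) * x) + d * ((x:ℂ) * x * x) := by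
    funext y; simp [Cub]; ring
  rw [e1]; exact h.congr_deriv (by simp; ring)

lemma Dop_cub (a b c d : ℂ) :
    Dop (Cub a b c d) = Cub (-Complex.I*b) (-(2*Complex.I)*c) (-(3*Complex.I)*d) 0 := by
  funext x
  rw [Dop, (cub_hasDerivAt a b c d x).deriv]
  show _ = Cub _ _ _ _ x
  simp only [Cub]; ring

lemma Xop_cub (a b c : ℂ) : Xop (Cub a b c 0) = Cub 0 a b c := by
  funext x; show _ = Cub _ _ _ _ x; simp only [Xop, Cub]; ring

lemma iter2 (f : (ℝ → ℂ) → (ℝ → ℂ)) (u : ℝ → ℂ) : f^[2] u = f (f u) := rfl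
lemma iter3 (f : (ℝ → ℂ) → (ℝ → ℂ)) (u : ℝ → ℂ) : f^[3] u = f (f (f u)) := rfl

lemma V1 : commOp (Xop^[3]) (Dop^[3]) (Cub 1 0 0 0) 0 = -(6*Complex.I) := by
  simp only [commOp, iter3, Dop_cub, Xop_cub, mul_zero, neg_zero, zero_mul, mul_one]
  simp only [Cub]
  push_cast
  ring_nf
  linear_combination (6*Complex.I) * Complex.I_sq

lemma hfA : (fun x => (1/(6*Complex.I)) * commOp (Xop^[3]) (Dop^[2]) (Cub 1 0 0 0) x)
    = Cub 0 (-Complex.I) 0 0 := by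
  funext x
  simp only [commOp, iter3, iter2, Dop_cub, Xop_cub, mul_zero, neg_zero, zero_mul, mul_one]
  simp only [Cub]
  field_simp
  ring_nf

lemma hfB : (fun x => (1/(6*Complex.I)) * commOp (Xop^[2]) (Dop^[3]) (Cub 1 0 0 0) x)
    = Cub 0 0 0 0 := by
  funext x
  simp only [commOp, iter3, iter2, Dop_cub, Xop_cub, mul_zero, neg_zero, zero_mul, mul_one]
  simp only [Cub]
  field_simp
  ring

lemma VA : (1/(6*Complex.I)) * commOp (Xop^[3]) (Dop^[2]) (Cub 0 0 0 0) 0 = 0 := by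
  simp only [commOp, iter3, iter2, Dop_cub, Xop_cub, mul_zero, neg_zero, zero_mul, mul_one]
  simp [Cub]

lemma VB : (1/(6*Complex.I)) * commOp (Xop^[2]) (Dop^[3]) (Cub 0 (-Complex.I) 0 0) 0
    = Complex.I := by
  simp only [commOp, iter3, iter2, Dop_cub, Xop_cub, mul_zero, neg_zero, zero_mul, mul_one]
  simp only [Cub]
  push_cast
  field_simp
  ring_nf
  simp [Complex.I_sq]

open MvPolynomial in
lemma hpb_eq : pb (X 0 ^ 3 : MvPolynomial (Fin 2) ℝ) (X 1 ^ 3)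
    = (3:ℝ) • pb (X 0 ^ 2 * X 1) (X 0 * X 1 ^ 2) := by
  simp [pb, pderiv_mul, pderiv_pow, pderiv_X, smul_eq_C_mul, map_ofNat]
  ring

open MvPolynomial in
/-- Groenewold's obstruction: there is no quantization `Op` (of polynomials of degree ≤ 4,
in particular) with `Op(x^k) = X^k`, `Op(ξ^k) = D^k` for `k ≤ 3`,
`Op(x²ξ) = (1/6i)[X³,D²]`, `Op(xξ²) = (1/6i)[X²,D³]`, satisfying the Dirac rule
`[Op a, Op b] = i Op({a,b})` for the pairs `(x³,ξ³)` and `(x²ξ, xξ²)`. -/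
theorem stmt17 :
    ¬ ∃ Op : MvPolynomial (Fin 2) ℝ → ((ℝ → ℂ) → (ℝ → ℂ)),
      (∀ (c : ℝ) (p : MvPolynomial (Fin 2) ℝ),
        Op (c • p) = fun u x => (c : ℂ) * Op p u x) ∧
      (∀ k ≤ 3, Op (X 0 ^ k) = Xop^[k]) ∧
      (∀ k ≤ 3, Op (X 1 ^ k) = Dop^[k]) ∧
      (Op (X 0 ^ 2 * X 1) = fun u x => (1 / (6 * Complex.I)) * commOp (Xop^[3]) (Dop^[2]) u x) ∧
      (Op (X 0 * X 1 ^ 2) = fun u x => (1 / (6 * Complex.I)) * commOp (Xop^[2]) (Dop^[3]) u x) ∧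
      (commOp (Op (X 0 ^ 3)) (Op (X 1 ^ 3))
        = fun u x => Complex.I * Op (pb (X 0 ^ 3) (X 1 ^ 3)) u x) ∧
      (commOp (Op (X 0 ^ 2 * X 1)) (Op (X 0 * X 1 ^ 2))
        = fun u x => Complex.I * Op (pb (X 0 ^ 2 * X 1) (X 0 * X 1 ^ 2)) u x) := by
  rintro ⟨Op, hsm, hX, hD, hA, hB, hd1, hd2⟩
  set u1 : ℝ → ℂ := Cub 1 0 0 0 with hu1
  -- first Dirac relation at (u1, 0)
  rw [hX 3 le_rfl, hD 3 le_rfl] at hd1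
  simp only [hpb_eq, hsm] at hd1
  have e1 : commOp (Xop^[3]) (Dop^[3]) u1 0
      = Complex.I * (((3:ℝ):ℂ) * Op (pb (X 0 ^ 2 * X 1) (X 0 * X 1 ^ 2)) u1 0) :=
    congrFun (congrFun hd1 u1) 0
  rw [hu1, V1] at e1
  -- second Dirac relation at (u1, 0)
  have e2 : commOp (Op (X 0 ^ 2 * X 1)) (Op (X 0 * X 1 ^ 2)) u1 0
      = Complex.I * Op (pb (X 0 ^ 2 * X 1) (X 0 * X 1 ^ 2)) u1 0 :=
    congrFun (congrFun hd2 u1) 0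
  have hOpBu1 : Op (X 0 * X 1 ^ 2) u1 = Cub 0 0 0 0 := by rw [hB]; exact hfB
  have hOpAu1 : Op (X 0 ^ 2 * X 1) u1 = Cub 0 (-Complex.I) 0 0 := by rw [hA]; exact hfA
  have lhs2 : commOp (Op (X 0 ^ 2 * X 1)) (Op (X 0 * X 1 ^ 2)) u1 0
      = Op (X 0 ^ 2 * X 1) (Op (X 0 * X 1 ^ 2) u1) 0
        - Op (X 0 * X 1 ^ 2) (Op (X 0 ^ 2 * X 1) u1) 0 := rfl
  rw [lhs2, hOpBu1, hOpAu1] at e2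
  have hOpA0 : Op (X 0 ^ 2 * X 1) (Cub 0 0 0 0) 0 = 0 := by rw [hA]; exact VA
  have hOpBfA : Op (X 0 * X 1 ^ 2) (Cub 0 (-Complex.I) 0 0) 0 = Complex.I := by
    rw [hB]; exact VB
  rw [hOpA0, hOpBfA] at e2
  push_cast at e1
  have hIz : Complex.I = 0 := by linear_combination (-1/3 : ℂ) * e1 + e2
  exact Complex.I_ne_zero hIz
end
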